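/- Let K = 2 with the graph 1 → 2, and let S : X_1 × X_2 → X_2 × X_1 be the coordinate swap (x_1, x_2) ↦ (x_2, x_1). Then for every μ ∈ P(X_1 × X_2), μ^{bA} = S( ( S(μ^A) )^A ), where the outer ^A-operation is performed on X_2 × X_1 with the swapped partition and graph 1 → 2. -/

import Mathlib

open MeasureTheory Finset
open scoped ENNReal NNReal

noncomputable section

abbrev I01 : Type := unitInterval

def half : I01 := ⟨1 / 2, by norm_num⟩

/-- Index of the dyadic cell of side length `2^{-η}` containing `t ∈ [0,1]`. -/
def cIdx (η : ℕ) (t : I01) : ℕ := min ⌊(t : ℝ) * 2 ^ η⌋₊ (2 ^ η - 1)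

lemma cIdx_le_real (η : ℕ) (t : I01) : (cIdx η t : ℝ) ≤ 2 ^ η - 1 := by
  have h : cIdx η t ≤ 2 ^ η - 1 := min_le_right _ _
  have h1 : (1 : ℕ) ≤ 2 ^ η := Nat.one_le_two_pow
  calc (cIdx η t : ℝ) ≤ ((2 ^ η - 1 : ℕ) : ℝ) := by exact_mod_cast h
    _ = 2 ^ η - 1 := by rw [Nat.cast_sub h1]; push_cast; ring

/-- Midpoint of the dyadic cell of side length `2^{-η}` containing `t`. -/
def cMid (η : ℕ) (t : I01) : I01 :=
  ⟨((cIdx η t : ℝ) + 1 / 2) / 2 ^ η, by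
    constructor
    · positivity
    · rw [div_le_one (by positivity)]
      have := cIdx_le_real η t
      linarith⟩

/-- Order-1 Wasserstein distance (w.r.t. the given metric, infimum over couplings). -/
def Wass {α : Type*} [MeasurableSpace α] [PseudoMetricSpace α] (μ ν : Measure α) : ℝ :=
  sInf {r | ∃ π : Measure (α × α), π.map Prod.fst = μ ∧ π.map Prod.snd = ν ∧
    r = ∫ p, dist p.1 p.2 ∂π}

/-- Total variation distance, `sup { ∫ f dμ - ∫ f dν : f measurable, |f| ≤ 1/2 }`. -/
def TVDist {α : Type*} [MeasurableSpace α] (μ ν : Measure α) : ℝ :=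
  sSup {r | ∃ f : α → ℝ, Measurable f ∧ (∀ x, |f x| ≤ 1 / 2) ∧
    r = (∫ x, f x ∂μ) - ∫ x, f x ∂ν}

/-- Total variation norm of a signed measure, `sup { ∫ f dν : |f| ≤ 1/2 } = |ν|(univ)/2`. -/
def tvNorm {α : Type*} [MeasurableSpace α] (s : SignedMeasure α) : ℝ :=
  (s.totalVariation Set.univ).toReal / 2

/-- `m` conditioned on `s` (normalized restriction), Dirac at `x₀` if `m s = 0`. -/
def condOn {α : Type*} [MeasurableSpace α] (m : Measure α) (s : Set α) (x₀ : α) : Measure α :=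
  if m s = 0 then Measure.dirac x₀ else (m s)⁻¹ • m.restrict s

/-- Empirical measure of the sample `ω`. -/
def empOf {α : Type*} [MeasurableSpace α] (n : ℕ) (ω : Fin n → α) : Measure α :=
  (n : ℝ≥0∞)⁻¹ • ∑ i : Fin n, Measure.dirac (ω i)

/-- Law of `n` i.i.d. samples from `μ`. -/
def iid {α : Type*} [MeasurableSpace α] (n : ℕ) (μ : Measure α) : Measure (Fin n → α) :=
  Measure.pi fun _ => μ

section Graphical

variable {K : ℕ}

abbrev Coord (d : Fin K → ℕ) (k : Fin K) : Type := Fin (d k) → I01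
abbrev Pt (d : Fin K → ℕ) : Type := ∀ k : Fin K, Coord d k
abbrev PtOn (d : Fin K → ℕ) (I : Finset (Fin K)) : Type := ∀ j : I, Coord d j.1

def projOn (d : Fin K → ℕ) (I : Finset (Fin K)) (x : Pt d) : PtOn d I := fun j => x j.1

def restrOn (d : Fin K → ℕ) {I J : Finset (Fin K)} (h : I ⊆ J) (y : PtOn d J) : PtOn d I :=
  fun j => y ⟨j.1, h j.2⟩

def basePt (d : Fin K → ℕ) : Pt d := fun _ _ => half

/-- The cell of the partition of `X_I` into cubes of side length `2^{-η}` containing `x`. -/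
def cellOn (d : Fin K → ℕ) (η : ℕ) (I : Finset (Fin K)) (x : PtOn d I) : Set (PtOn d I) :=
  {y | ∀ j i, cIdx η (y j i) = cIdx η (x j i)}

/-- The cylinder over the cell of `A_I` containing the coordinates `x_I` of `x`. -/
def cylOf (d : Fin K → ℕ) (η : ℕ) (I : Finset (Fin K)) (x : Pt d) : Set (Pt d) :=
  {y | ∀ j ∈ I, ∀ i, cIdx η (y j i) = cIdx η (x j i)}

def midPtOn (d : Fin K → ℕ) (η : ℕ) (I : Finset (Fin K)) (x : PtOn d I) : PtOn d I :=
  fun j i => cMid η (x j i)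

def midPt (d : Fin K → ℕ) (η : ℕ) (x : Pt d) : Pt d := fun k i => cMid η (x k i)

/-- The DAG (given by its parent map) is topologically sorted. -/
def SortedGraph (pa : Fin K → Finset (Fin K)) : Prop := ∀ k, ∀ j ∈ pa k, j < k

/-- A set of nodes is fully connected (any two of its nodes are joined by an edge). -/
def FullConn (pa : Fin K → Finset (Fin K)) (I : Finset (Fin K)) : Prop :=
  ∀ i ∈ I, ∀ j ∈ I, i < j → i ∈ pa j

/-- The graph has no colliders: every parent set is fully connected. -/
def NoColliders (pa : Fin K → Finset (Fin K)) : Prop := ∀ k, FullConn pa (pa k)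

def below (k : Fin K) : Finset (Fin K) := Finset.univ.filter fun j => j < k
def uptoI (k : Fin K) : Finset (Fin K) := Finset.univ.filter fun j => j ≤ k
def preOf (pa : Fin K → Finset (Fin K)) (k : Fin K) : Finset (Fin K) := uptoI k \ pa k

def dpa (d : Fin K → ℕ) (pa : Fin K → Finset (Fin K)) (k : Fin K) : ℕ := ∑ j ∈ pa k, d j

def dloc (d : Fin K → ℕ) (pa : Fin K → Finset (Fin K)) : ℕ :=
  Finset.univ.sup fun k : Fin K => max 2 (d k) + dpa d pa k

def dmax (d : Fin K → ℕ) : ℕ := Finset.univ.sup fun k : Fin K => max 2 (d k)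

/-- `κ` is a regular conditional distribution of the coordinates in `J` given those in `I`,
under `μ`. -/
def IsCondD (d : Fin K → ℕ) (μ : Measure (Pt d)) (I J : Finset (Fin K))
    (κ : PtOn d I → Measure (PtOn d J)) : Prop :=
  Measurable κ ∧ (∀ y, IsProbabilityMeasure (κ y)) ∧
    ∀ (A : Set (PtOn d I)) (B : Set (PtOn d J)), MeasurableSet A → MeasurableSet B →
      μ {x | projOn d I x ∈ A ∧ projOn d J x ∈ B} = ∫⁻ y in A, κ y B ∂(μ.map (projOn d I))

/-- `μ ∈ P_G`: for each node, some conditional distribution of `x_k` given all earlier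
coordinates factors through the parent coordinates only. -/
def MemPG (d : Fin K → ℕ) (pa : Fin K → Finset (Fin K)) (μ : Measure (Pt d)) : Prop :=
  ∀ k : Fin K, ∃ κ : PtOn d (pa k) → Measure (PtOn d ({k} : Finset (Fin K))),
    IsCondD d μ (below k ∪ pa k) {k}
      fun y => κ (restrOn d (fun _ hj => Finset.mem_union_right _ hj) y)

/-- Wasserstein-Lipschitz kernel assumption with constant `L`. -/
def WLip (d : Fin K → ℕ) (pa : Fin K → Finset (Fin K)) (L : ℝ) (μ : Measure (Pt d)) : Prop :=
  ∀ k : Fin K, 1 ≤ k.1 →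
    ∃ κ : PtOn d (pa k) → Measure (PtOn d ({k} : Finset (Fin K))),
      IsCondD d μ (pa k) {k} κ ∧
        ∀ x x' : PtOn d (pa k), Wass (κ x) (κ x') ≤ L * dist x x'

/-- Total-variation-Lipschitz kernel assumption with constant `L`. -/
def TVLip (d : Fin K → ℕ) (pa : Fin K → Finset (Fin K)) (L : ℝ) (μ : Measure (Pt d)) : Prop :=
  ∀ k : Fin K, 1 ≤ k.1 →
    (∃ κ : PtOn d (pa k) → Measure (PtOn d ({k} : Finset (Fin K))),
      IsCondD d μ (pa k) {k} κ ∧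
        ∀ x x', TVDist (κ x) (κ x') ≤ L * dist x x') ∧
    (∃ κ : PtOn d (pa k) → Measure (PtOn d (preOf pa k)),
      IsCondD d μ (pa k) (preOf pa k) κ ∧
        ∀ x x', TVDist (κ x) (κ x') ≤ L * dist x x') ∧
    (∃ κ : PtOn d ({k} : Finset (Fin K)) → Measure (PtOn d (pa k)),
      IsCondD d μ {k} (pa k) κ ∧
        ∀ x x', TVDist (κ x) (κ x') ≤ L * dist x x')

/-- Iterated construction of the graph product measure `∏_k κ_k(dx_k | x_pa(k))`. -/
def chainM (d : Fin K → ℕ) (pa : Fin K → Finset (Fin K))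
    (κ : ∀ k : Fin K, PtOn d (pa k) → Measure (PtOn d ({k} : Finset (Fin K)))) :
    ℕ → Measure (Pt d)
  | 0 => Measure.dirac (basePt d)
  | n + 1 =>
      if h : n < K then
        (chainM d pa κ n).bind fun x =>
          (κ ⟨n, h⟩ (projOn d (pa ⟨n, h⟩) x)).map fun y =>
            Function.update x ⟨n, h⟩ (y ⟨⟨n, h⟩, Finset.mem_singleton_self _⟩)
      else chainM d pa κ n

def graphProd (d : Fin K → ℕ) (pa : Fin K → Finset (Fin K))
    (κ : ∀ k : Fin K, PtOn d (pa k) → Measure (PtOn d ({k} : Finset (Fin K)))) :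
    Measure (Pt d) := chainM d pa κ K

/-- Completion of `x ∈ X_pa(k)` to a point of `X` (cell midpoints on `pa k`, `1/2` elsewhere). -/
def extendPt (d : Fin K → ℕ) (pa : Fin K → Finset (Fin K)) (η : ℕ) (k : Fin K)
    (x : PtOn d (pa k)) : Pt d :=
  fun j => if h : j ∈ pa k then (fun i => cMid η (x ⟨j, h⟩ i)) else fun _ => half

/-- The measure `ν^A` built from a choice `κ` of conditional kernels of `ν`. -/
def opA (d : Fin K → ℕ) (pa : Fin K → Finset (Fin K)) (η : ℕ) (ν : Measure (Pt d))
    (κ : ∀ k : Fin K, PtOn d (pa k) → Measure (PtOn d ({k} : Finset (Fin K)))) :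
    Measure (Pt d) :=
  graphProd d pa fun k x =>
    (condOn (ν.map (projOn d (pa k))) (cellOn d η (pa k) x) (midPtOn d η (pa k) x)).bind (κ k)

/-- The canonical (kernel-choice free) version of `ν^A`. -/
def opACanon (d : Fin K → ℕ) (pa : Fin K → Finset (Fin K)) (η : ℕ) (ν : Measure (Pt d)) :
    Measure (Pt d) :=
  graphProd d pa fun k x =>
    (condOn ν (projOn d (pa k) ⁻¹' cellOn d η (pa k) x) (extendPt d pa η k x)).map
      (projOn d ({k} : Finset (Fin K)))

/-- The kernel `μ^{bA}(dx_k | x_pa(k)) = Σ_{c_k} μ(c_k | c_pa(k)(x_pa(k))) μ_{k|c_k}(dx_k)`. -/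
def kerBA (d : Fin K → ℕ) (pa : Fin K → Finset (Fin K)) (η : ℕ) (μ : Measure (Pt d))
    (k : Fin K) (x : PtOn d (pa k)) : Measure (PtOn d ({k} : Finset (Fin K))) :=
  (((condOn μ (projOn d (pa k) ⁻¹' cellOn d η (pa k) x) (extendPt d pa η k x)).map
      (projOn d ({k} : Finset (Fin K)))).bind) fun z =>
    condOn (μ.map (projOn d ({k} : Finset (Fin K)))) (cellOn d η {k} z) (midPtOn d η {k} z)

/-- The measure `μ^{bA}`. -/
def opBA (d : Fin K → ℕ) (pa : Fin K → Finset (Fin K)) (η : ℕ) (μ : Measure (Pt d)) :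
    Measure (Pt d) := graphProd d pa (kerBA d pa η μ)

/-- The midpoint projection `μ^M` of `μ^{bA}`. -/
def opM (d : Fin K → ℕ) (pa : Fin K → Finset (Fin K)) (η : ℕ) (μ : Measure (Pt d)) :
    Measure (Pt d) := (opBA d pa η μ).map (midPt d η)

/-- The kernel of `μ^M` built from the conditional kernel `κ` of `μ`:
cell-average of `κ`, pushed to cell midpoints. -/
def kerM (d : Fin K → ℕ) (pa : Fin K → Finset (Fin K)) (η : ℕ) (μ : Measure (Pt d)) (k : Fin K)
    (κ : PtOn d (pa k) → Measure (PtOn d ({k} : Finset (Fin K)))) (y : PtOn d (pa k)) :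
    Measure (PtOn d ({k} : Finset (Fin K))) :=
  ((condOn (μ.map (projOn d (pa k))) (cellOn d η (pa k) y) (midPtOn d η (pa k) y)).bind κ).map
    (midPtOn d η ({k} : Finset (Fin K)))

/-- `m(dx_k | c_pa(k)(x))`: `m` conditioned on the parent cell of `x`, projected to node `k`. -/
def cellCondProj (d : Fin K → ℕ) (pa : Fin K → Finset (Fin K)) (η : ℕ) (m : Measure (Pt d))
    (k : Fin K) (x : Pt d) : Measure (PtOn d ({k} : Finset (Fin K))) :=
  (condOn m (projOn d (pa k) ⁻¹' cellOn d η (pa k) (projOn d (pa k) x)) (midPt d η x)).map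
    (projOn d ({k} : Finset (Fin K)))

/-- Minimax risk `V_Q(n)` for estimating a measure in `Q` from `n` i.i.d. samples,
in Wasserstein distance. -/
def minimax (d : Fin K → ℕ) (Q : Set (Measure (Pt d))) (n : ℕ) : ℝ :=
  ⨅ E : {E : (Fin n → Pt d) → Measure (Pt d) // Measurable E},
    ⨆ μ : Q, ∫ ω, Wass (μ : Measure (Pt d)) (E.1 ω) ∂(iid n (μ : Measure (Pt d)))

/-- Number of directed paths of length `ℓ` starting at `k` (following edge directions). -/
def pathCount (pa : Fin K → Finset (Fin K)) : ℕ → Fin K → ℕ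
  | 0, _ => 1
  | ℓ + 1, k => ∑ j ∈ Finset.univ.filter (fun j => k ∈ pa j), pathCount pa ℓ j

/-- The constant `M_{L,k} = 1 + Σ_{ℓ=1}^K a_{k,ℓ} L^ℓ`. -/
def MConst (pa : Fin K → Finset (Fin K)) (L : ℝ) (k : Fin K) : ℝ :=
  1 + ∑ ℓ ∈ Finset.Icc 1 K, (pathCount pa ℓ k : ℝ) * L ^ ℓ

/-- Lebesgue measure on `[0,1]^d = Π_k Π_i [0,1]`. -/
def lebPt (d : Fin K → ℕ) : Measure (Pt d) :=
  Measure.pi fun k => Measure.pi fun _ : Fin (d k) => (volume : Measure ℝ).comap Subtype.val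

/-- Product of the (one-node) marginals of `ν`. -/
def prodMarg (d : Fin K → ℕ) (ν : Measure (Pt d)) : Measure (Pt d) :=
  Measure.pi fun k => ν.map fun x => x k

/-- Cell average `f^ν` of `f` w.r.t. the product of the marginals of `ν`. -/
def fAvg (d : Fin K → ℕ) (η : ℕ) (ν : Measure (Pt d)) (f : Pt d → ℝ) (x : Pt d) : ℝ :=
  if prodMarg d ν (cylOf d η Finset.univ x) = 0 then 0
  else (∫ y in cylOf d η Finset.univ x, f y ∂prodMarg d ν) /
    (prodMarg d ν (cylOf d η Finset.univ x)).toReal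

/-- Combining points over two disjoint blocks of nodes. -/
def glue (d : Fin K → ℕ) {J J' : Finset (Fin K)} (p : PtOn d J × PtOn d J') :
    PtOn d (J ∪ J') := fun j =>
  if h : j.1 ∈ J then p.1 ⟨j.1, h⟩
  else p.2 ⟨j.1, by
    rcases Finset.mem_union.mp j.2 with h' | h'
    · exact absurd h' h
    · exact h'⟩

/-- `X_J` and `X_J'` are conditionally independent given `X_I` under `μ`. -/
def CondIndepOn (d : Fin K → ℕ) (μ : Measure (Pt d)) (I J J' : Finset (Fin K)) : Prop :=
  ∃ (κJ : PtOn d I → Measure (PtOn d J)) (κJ' : PtOn d I → Measure (PtOn d J')),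
    IsCondD d μ I J κJ ∧ IsCondD d μ I J' κJ' ∧
      IsCondD d μ I (J ∪ J') fun y => ((κJ y).prod (κJ' y)).map (glue d)

/-- The set `P_CI` of probability measures all of whose disjoint coordinate blocks are
conditionally independent given any disjoint nonempty block. -/
def PCI (d : Fin K → ℕ) : Set (Measure (Pt d)) :=
  {μ | IsProbabilityMeasure μ ∧
    ∀ I J J' : Finset (Fin K), I.Nonempty → Disjoint I J → Disjoint I J' → Disjoint J J' →
      CondIndepOn d μ I J J'}

end Graphical

section TwoBlocks

abbrev Vec (m : ℕ) : Type := Fin m → I01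

def cellV (η : ℕ) {m : ℕ} (x : Vec m) : Set (Vec m) :=
  {y | ∀ i, cIdx η (y i) = cIdx η (x i)}

def midV (η : ℕ) {m : ℕ} (x : Vec m) : Vec m := fun i => cMid η (x i)

/-- `ν^A` for two blocks and the graph `1 → 2`. -/
def opA2 {m₁ m₂ : ℕ} (η : ℕ) (ν : Measure (Vec m₁ × Vec m₂)) : Measure (Vec m₁ × Vec m₂) :=
  ν.bind fun p =>
    ((condOn ν (Prod.fst ⁻¹' cellV η p.1) (midV η p.1, midV η p.2)).map Prod.snd).map
      fun y => (p.1, y)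

/-- `μ^{bA}` for two blocks:  `Σ_{c₁,c₂} μ(c₁ × c₂) (μ_{1|c₁} ⊗ μ_{2|c₂})`. -/
def opBA2 {m₁ m₂ : ℕ} (η : ℕ) (μ : Measure (Vec m₁ × Vec m₂)) : Measure (Vec m₁ × Vec m₂) :=
  μ.bind fun p =>
    (condOn (μ.map Prod.fst) (cellV η p.1) (midV η p.1)).prod
      (condOn (μ.map Prod.snd) (cellV η p.2) (midV η p.2))

/-- The kernel `μ^{bA}(dx₂ | x₁) = Σ_{c₂} μ(c₂ | c₁(x₁)) μ_{2|c₂}(dx₂)`. -/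
def kerBA2 {m₁ m₂ : ℕ} (η : ℕ) (μ : Measure (Vec m₁ × Vec m₂)) (x₁ : Vec m₁) :
    Measure (Vec m₂) :=
  (((condOn μ (Prod.fst ⁻¹' cellV η x₁) (midV η x₁, fun _ => half)).map Prod.snd).bind) fun z =>
    condOn (μ.map Prod.snd) (cellV η z) (midV η z)

/-- `κ` is a conditional distribution of the second block given the first, under `μ`. -/
def IsCD2 {m₁ m₂ : ℕ} (μ : Measure (Vec m₁ × Vec m₂)) (κ : Vec m₁ → Measure (Vec m₂)) : Prop :=
  Measurable κ ∧ (∀ x, IsProbabilityMeasure (κ x)) ∧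
    ∀ (A : Set (Vec m₁)) (B : Set (Vec m₂)), MeasurableSet A → MeasurableSet B →
      μ (A ×ˢ B) = ∫⁻ x in A, κ x B ∂(μ.map Prod.fst)

end TwoBlocks

end

/-!
Everything factors through the finitely many dyadic cubes `c_i ⊂ X₁`, `c_j ⊂ X₂`. On a rectangle,
`μ^{bA}(A × B) = Σ_{i,j} μ(c_i × c_j) μ₁(A | c_i) μ₂(B | c_j)`. The operation `^A` keeps the
second marginal, so `S(μ^A)` has first marginal `μ₂`, and `S(μ^A)(c_j × A) = Σ_i μ(c_i × c_j)
μ₁(A | c_i)`. Applying `^A` to `S(μ^A)` conditions this on the cube `c_j` and multiplies by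
`μ₂(B | c_j)`, which gives the same double sum. Finite measures on a product that agree on
rectangles are equal.
-/

open Set

noncomputable section DyadicCubes

variable (η : ℕ)

lemma measurable_cIdx : Measurable (cIdx η) :=
  (measurable_from_top (f := fun n : ℕ => min n (2 ^ η - 1))).comp
    (Nat.measurable_floor.comp (measurable_subtype_coe.mul_const _))

lemma cIdx_lt_two_pow (t : I01) : cIdx η t < 2 ^ η :=
  (min_le_right _ _).trans_lt (Nat.sub_lt (by positivity) one_pos)

def cubeIndex {m : ℕ} (x : Vec m) : Fin m → Fin (2 ^ η) :=
  fun i => ⟨cIdx η (x i), cIdx_lt_two_pow η (x i)⟩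

lemma measurable_cubeIndex {m : ℕ} : Measurable (cubeIndex η (m := m)) := by
  refine measurable_pi_lambda _ fun i => measurable_to_countable' fun k => ?_
  have : (fun x : Vec m => cubeIndex η x i) ⁻¹' {k} = (fun x => cIdx η (x i)) ⁻¹' {k.1} := by
    ext x; simp [cubeIndex, Fin.ext_iff]
  rw [this]
  exact (measurable_cIdx η).comp (measurable_pi_apply i) (measurableSet_singleton _)

def cube {m : ℕ} (c : Fin m → Fin (2 ^ η)) : Set (Vec m) := cubeIndex η ⁻¹' {c}

lemma measurableSet_cube {m : ℕ} (c : Fin m → Fin (2 ^ η)) : MeasurableSet (cube η c) :=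
  measurable_cubeIndex η (measurableSet_singleton c)

def cubeMid {m : ℕ} (c : Fin m → Fin (2 ^ η)) : Vec m := fun i =>
  ⟨(((c i : ℕ) : ℝ) + 1 / 2) / 2 ^ η, by
    constructor
    · positivity
    · rw [div_le_one (by positivity)]
      have : ((c i : ℕ) : ℝ) + 1 ≤ 2 ^ η := by exact_mod_cast (c i).2
      linarith⟩

lemma cellV_eq_cube {m : ℕ} (x : Vec m) : cellV η x = cube η (cubeIndex η x) := by
  ext y
  simp [cellV, cube, cubeIndex, funext_iff, Fin.ext_iff]

lemma midV_eq_cubeMid {m : ℕ} (x : Vec m) : midV η x = cubeMid η (cubeIndex η x) := rfl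

end DyadicCubes

section Measures

variable {α β ι : Type*} [MeasurableSpace α] [MeasurableSpace β] [MeasurableSpace ι]
  [MeasurableSingletonClass ι]

lemma Measurable.of_countable_index [Countable ι] {f : α → ι} (hf : Measurable f)
    {g : ι → α → β} (hg : ∀ i, Measurable (g i)) : Measurable fun a => g (f a) a :=
  (measurable_from_prod_countable_left (f := fun q : α × ι => g q.2 q.1) hg).comp
    (measurable_id.prodMk hf)

variable [Fintype ι]

lemma lintegral_comp_fintype (μ : Measure α) {f : α → ι} (hf : Measurable f) (g : ι → ℝ≥0∞) :
    ∫⁻ a, g (f a) ∂μ = ∑ i, μ (f ⁻¹' {i}) * g i := by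
  rw [← lintegral_map (measurable_of_countable g) hf, lintegral_fintype]
  simp_rw [Measure.map_apply hf (measurableSet_singleton _), mul_comm]

lemma sum_measure_inter_preimage_singleton (μ : Measure α) {f : α → ι} (hf : Measurable f)
    (s : Set α) : ∑ i, μ (s ∩ f ⁻¹' {i}) = μ s := by
  have h := sum_measure_preimage_singleton (μ := μ.restrict s) Finset.univ
    fun i _ => hf (measurableSet_singleton i)
  simp_rw [Finset.coe_univ, preimage_univ, Measure.restrict_apply_univ,
    Measure.restrict_apply (hf (measurableSet_singleton _)), inter_comm] at h
  exact h

lemma map_swap_apply_prod (ν : Measure (α × β)) {s : Set β} {t : Set α} (hs : MeasurableSet s)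
    (ht : MeasurableSet t) :
    ν.map Prod.swap (s ×ˢ t) = ν (t ×ˢ s) := by
  rw [Measure.map_apply measurable_swap (hs.prod ht), preimage_swap_prod]

end Measures

section CubeSums

variable (η : ℕ) {α : Type*} [MeasurableSpace α] {a : ℕ}

lemma sum_measure_cube_prod (ν : Measure (Vec a × α)) (t : Set α) :
    ∑ i, ν (cube η i ×ˢ t) = ν (univ ×ˢ t) := by
  convert sum_measure_inter_preimage_singleton ν ((measurable_cubeIndex η).comp measurable_fst)
    (univ ×ˢ t) using 3 with i
  ext p
  simp [cube, and_comm]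

lemma sum_measure_prod_cube (ν : Measure (α × Vec a)) (s : Set α) :
    ∑ j, ν (s ×ˢ cube η j) = ν (s ×ˢ univ) := by
  convert sum_measure_inter_preimage_singleton ν ((measurable_cubeIndex η).comp measurable_snd)
    (s ×ˢ univ) using 3 with j
  ext p
  simp [cube]

lemma preimage_prodMap_cubeIndex {a b : ℕ} (i : Fin a → Fin (2 ^ η)) (j : Fin b → Fin (2 ^ η)) :
    Prod.map (cubeIndex η) (cubeIndex η) ⁻¹' {(i, j)} = cube η i ×ˢ cube η j := by
  rw [← singleton_prod_singleton, preimage_prod_map_prod]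
  rfl

end CubeSums

section CondOn

variable {α : Type*} [MeasurableSpace α]

instance isProbabilityMeasure_condOn (m : Measure α) [IsFiniteMeasure m] (s : Set α) (x₀ : α) :
    IsProbabilityMeasure (condOn m s x₀) := by
  rw [condOn]
  split_ifs with h
  · infer_instance
  · constructor
    rw [Measure.smul_apply, smul_eq_mul, Measure.restrict_apply_univ]
    exact ENNReal.inv_mul_cancel h (measure_ne_top m s)

/-- The Dirac fallback of `condOn` on a null set is invisible under a weight that vanishes with
`m s`. -/
lemma mul_condOn_apply (m : Measure α) {s t : Set α} (x₀ : α)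
    (ht : MeasurableSet t) {w : ℝ≥0∞} (hw : m s = 0 → w = 0) :
    w * condOn m s x₀ t = w * (m (t ∩ s) / m s) := by
  by_cases h : m s = 0
  · simp [hw h]
  · rw [condOn, if_neg h, Measure.smul_apply, smul_eq_mul, Measure.restrict_apply ht,
      ENNReal.div_eq_inv_mul]

end CondOn

section CellOperations

variable (η : ℕ) {a b : ℕ}

lemma opA2_apply_prod (ν : Measure (Vec a × Vec b)) [IsFiniteMeasure ν]
    {A : Set (Vec a)} {B : Set (Vec b)} (hA : MeasurableSet A) (hB : MeasurableSet B) :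
    opA2 η ν (A ×ˢ B) =
      ∑ i, ν (cube η i ×ˢ B) * ν.map Prod.fst (A ∩ cube η i) / ν.map Prod.fst (cube η i) := by
  classical
  set Ψ : (Fin a → Fin (2 ^ η)) × (Fin b → Fin (2 ^ η)) → Measure (Vec b) := fun c =>
    (condOn ν (Prod.fst ⁻¹' cube η c.1) (cubeMid η c.1, cubeMid η c.2)).map Prod.snd
  set idx := Prod.map (cubeIndex η (m := a)) (cubeIndex η (m := b))
  have h_idx : Measurable idx := (measurable_cubeIndex η).prodMap (measurable_cubeIndex η)
  have h_kernel : opA2 η ν = ν.bind fun p => (Ψ (idx p)).map (Prod.mk p.1) := by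
    simp only [opA2, cellV_eq_cube, midV_eq_cubeMid]
    rfl
  have h_meas : Measurable fun p : Vec a × Vec b => (Ψ (idx p)).map (Prod.mk p.1) := by
    refine h_idx.of_countable_index (g := fun c p => (Ψ c).map (Prod.mk p.1)) fun c =>
      Measure.measurable_of_measurable_coe _ fun s hs => ?_
    simp_rw [Measure.map_apply measurable_prodMk_left hs]
    exact (measurable_measure_prodMk_left hs).comp measurable_fst
  have h_marg : ∀ {s}, MeasurableSet s → ν.map Prod.fst s = ν (Prod.fst ⁻¹' s) :=
    fun hs => Measure.map_apply measurable_fst hs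
  calc opA2 η ν (A ×ˢ B) = ∫⁻ p in Prod.fst ⁻¹' A, Ψ (idx p) B ∂ν := by
        rw [h_kernel, Measure.bind_apply (hA.prod hB) h_meas.aemeasurable,
          ← lintegral_indicator (measurable_fst hA)]
        congr 1 with p
        rw [Measure.map_apply measurable_prodMk_left (hA.prod hB), mk_preimage_prod_right_eq_if]
        by_cases h : p.1 ∈ A <;> simp [h]
    _ = ∑ i, ∑ j, ν ((A ∩ cube η i) ×ˢ cube η j) * Ψ (i, j) B := by
        rw [lintegral_comp_fintype _ h_idx (fun c => Ψ c B), Fintype.sum_prod_type]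
        refine Finset.sum_congr rfl fun i _ => Finset.sum_congr rfl fun j _ => ?_
        rw [Measure.restrict_apply (h_idx (measurableSet_singleton _)),
          preimage_prodMap_cubeIndex, Set.inter_comm, ← prod_univ, prod_inter_prod,
          Set.univ_inter]
    _ = ∑ i, ∑ j, ν ((A ∩ cube η i) ×ˢ cube η j) *
          (ν (cube η i ×ˢ B) / ν.map Prod.fst (cube η i)) := by
        refine Finset.sum_congr rfl fun i _ => Finset.sum_congr rfl fun j _ => ?_
        rw [Measure.map_apply measurable_snd hB, mul_condOn_apply _ _ (measurable_snd hB),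
          h_marg (measurableSet_cube η _), ← prod_univ, ← univ_prod, prod_inter_prod,
          Set.univ_inter, Set.inter_univ]
        exact fun h0 => measure_mono_null (fun p hp => hp.1.2) h0
    _ = _ := by
        refine Finset.sum_congr rfl fun i _ => ?_
        rw [← Finset.sum_mul, sum_measure_prod_cube, h_marg (hA.inter (measurableSet_cube η i)),
          ← prod_univ]
        simp only [div_eq_mul_inv]
        ring

lemma map_snd_opA2 (ν : Measure (Vec a × Vec b)) [IsFiniteMeasure ν] :
    (opA2 η ν).map Prod.snd = ν.map Prod.snd := by
  ext B hB
  have h_cube : ∀ i, ν (cube η i ×ˢ B) ≤ ν.map Prod.fst (cube η i) := fun i => by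
    rw [Measure.map_apply measurable_fst (measurableSet_cube η i), ← prod_univ]
    exact measure_mono (prod_mono subset_rfl (subset_univ _))
  rw [Measure.map_apply measurable_snd hB, Measure.map_apply measurable_snd hB, ← univ_prod,
    opA2_apply_prod η ν MeasurableSet.univ hB, ← sum_measure_cube_prod η ν B]
  refine Finset.sum_congr rfl fun i _ => ?_
  rw [Set.univ_inter]
  exact ENNReal.mul_div_cancel_right' (fun h0 => le_zero_iff.mp (h0 ▸ h_cube i))
    fun h => absurd h (measure_ne_top _ _)

instance isFiniteMeasure_opA2 (ν : Measure (Vec a × Vec b)) [IsFiniteMeasure ν] :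
    IsFiniteMeasure (opA2 η ν) :=
  (Measure.isFiniteMeasure_map_iff measurable_snd.aemeasurable).mp
    (map_snd_opA2 η ν ▸ inferInstance)

lemma opBA2_apply_prod (μ : Measure (Vec a × Vec b)) [IsFiniteMeasure μ]
    {A : Set (Vec a)} {B : Set (Vec b)} (hA : MeasurableSet A) (hB : MeasurableSet B) :
    opBA2 η μ (A ×ˢ B) =
      ∑ i, ∑ j, μ (cube η i ×ˢ cube η j) *
        (μ.map Prod.fst (A ∩ cube η i) / μ.map Prod.fst (cube η i)) *
        (μ.map Prod.snd (B ∩ cube η j) / μ.map Prod.snd (cube η j)) := by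
  set G : (Fin a → Fin (2 ^ η)) × (Fin b → Fin (2 ^ η)) → Measure (Vec a × Vec b) := fun c =>
    (condOn (μ.map Prod.fst) (cube η c.1) (cubeMid η c.1)).prod
      (condOn (μ.map Prod.snd) (cube η c.2) (cubeMid η c.2))
  set idx := Prod.map (cubeIndex η (m := a)) (cubeIndex η (m := b))
  have h_idx : Measurable idx := (measurable_cubeIndex η).prodMap (measurable_cubeIndex η)
  have h_kernel : opBA2 η μ = μ.bind fun p => G (idx p) := by
    simp only [opBA2, cellV_eq_cube, midV_eq_cubeMid]
    rfl
  have h_meas : Measurable fun p => G (idx p) := (measurable_of_countable G).comp h_idx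
  rw [h_kernel, Measure.bind_apply (hA.prod hB) h_meas.aemeasurable,
    lintegral_comp_fintype _ h_idx (fun c => G c (A ×ˢ B)), Fintype.sum_prod_type]
  refine Finset.sum_congr rfl fun i _ => Finset.sum_congr rfl fun j _ => ?_
  have h₁ : μ.map Prod.fst (cube η i) = 0 → μ (cube η i ×ˢ cube η j) = 0 := fun h0 => by
    rw [Measure.map_apply measurable_fst (measurableSet_cube η i)] at h0
    exact measure_mono_null (fun p hp => hp.1) h0
  have h₂ : μ.map Prod.snd (cube η j) = 0 → μ (cube η i ×ˢ cube η j) = 0 := fun h0 => by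
    rw [Measure.map_apply measurable_snd (measurableSet_cube η j)] at h0
    exact measure_mono_null (fun p hp => hp.2) h0
  rw [preimage_prodMap_cubeIndex, Measure.prod_prod, ← mul_assoc,
    mul_condOn_apply _ _ hA h₁, mul_condOn_apply _ _ hB fun h0 => by simp [h₂ h0]]

end CellOperations

/-- Lemma: `μ^{bA}` as a twofold application of the `^A`-operation.
For two blocks with graph `1 → 2` and the coordinate swap `S`, for every probability measure
`μ` on `X₁ × X₂` we have `μ^{bA} = S(((S(μ^A))^A))`. -/
theorem stmt10 {m₁ m₂ : ℕ} (η : ℕ) (μ : Measure (Vec m₁ × Vec m₂))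
    (hμ : IsProbabilityMeasure μ) :
    opBA2 η μ = (opA2 η ((opA2 η μ).map Prod.swap)).map Prod.swap := by
  set ρ := (opA2 η μ).map Prod.swap
  have h_marg : ρ.map Prod.fst = μ.map Prod.snd := by
    rw [Measure.map_map measurable_fst measurable_swap]
    exact map_snd_opA2 η μ
  refine (Measure.ext_prod fun {A B} hA hB => ?_).symm
  rw [map_swap_apply_prod _ hA hB, opA2_apply_prod η ρ hB hA, h_marg,
    opBA2_apply_prod η μ hA hB, Finset.sum_comm]
  simp_rw [ρ, map_swap_apply_prod _ (measurableSet_cube η _) hA,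
    opA2_apply_prod η μ hA (measurableSet_cube η _)]
  simp only [div_eq_mul_inv, Finset.sum_mul]
  refine Finset.sum_congr rfl fun j _ => Finset.sum_congr rfl fun i _ => ?_
  ring
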